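/- Let M and N be minion cores with M ∼ N (i.e., there exist minion homomorphisms in both directions). Then M and N are isomorphic as minions. -/
import Mathlib


/-- An abstract minion: nonempty sets indexed by positive integers with functorial minor maps. -/
structure Minion where
  carrier : ℕ+ → Type
  nonempty : ∀ n : ℕ+, Nonempty (carrier n)
  map : ∀ {n m : ℕ+}, (Fin n → Fin m) → carrier n → carrier m
  map_id : ∀ (n : ℕ+) (f : carrier n), map (id : Fin n → Fin n) f = f
  map_comp : ∀ {n m k : ℕ+} (α : Fin m → Fin k) (β : Fin n → Fin m) (f : carrier n),
    map α (map β f) = map (α ∘ β) f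

/-- A minion homomorphism: an arity-preserving family of maps commuting with minor maps. -/
structure MinionHom (M N : Minion) where
  app : ∀ n : ℕ+, M.carrier n → N.carrier n
  natural : ∀ {n m : ℕ+} (α : Fin n → Fin m) (f : M.carrier n),
    app m (M.map α f) = N.map α (app n f)

/-- `M ∼ N`: minion homomorphisms exist in both directions. -/
def MinionEquiv (M N : Minion) : Prop :=
  Nonempty (MinionHom M N) ∧ Nonempty (MinionHom N M)

/-- Two minions are isomorphic if there is a homomorphism that is bijective in every arity. -/
def MinionIso (M N : Minion) : Prop :=
  ∃ ξ : MinionHom M N, ∀ n : ℕ+, Function.Bijective (ξ.app n)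

/-- An endomorphism is an automorphism if it has a two-sided inverse homomorphism. -/
def IsMinionAut {M : Minion} (ξ : MinionHom M M) : Prop :=
  ∃ μ : MinionHom M M, (∀ (n : ℕ+) (f : M.carrier n), μ.app n (ξ.app n f) = f) ∧
    (∀ (n : ℕ+) (f : M.carrier n), ξ.app n (μ.app n f) = f)

/-- A minion core: every endomorphism is an automorphism. -/
def IsMinionCore (N : Minion) : Prop := ∀ ξ : MinionHom N N, IsMinionAut ξ

/-- Composition of minion homomorphisms. -/
def MinionHom.comp {A B C : Minion} (g : MinionHom B C) (f : MinionHom A B) :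
    MinionHom A C where
  app n x := g.app n (f.app n x)
  natural α x := by simp only [f.natural, g.natural]

theorem minion_cores_equiv_iso (M N : Minion)
    (hM : IsMinionCore M) (hN : IsMinionCore N) (h : MinionEquiv M N) :
    MinionIso M N := by
  obtain ⟨⟨ξ⟩, ⟨μ⟩⟩ := h
  obtain ⟨ρ, hρ1, hρ2⟩ := hM (μ.comp ξ)
  obtain ⟨σ, hσ1, hσ2⟩ := hN (ξ.comp μ)
  refine ⟨ξ, fun n => ⟨fun a b hab => ?_, fun y => ?_⟩⟩
  · have ha := hρ1 n a
    have hb := hρ1 n b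
    change ρ.app n (μ.app n (ξ.app n a)) = a at ha
    change ρ.app n (μ.app n (ξ.app n b)) = b at hb
    rw [hab] at ha
    exact ha.symm.trans hb
  · exact ⟨μ.app n (σ.app n y), hσ2 n y⟩
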